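/- Let K be an algebraically closed field and let σ, τ be commuting K-linear automorphisms of 𝒞ₙ such that [n] is a single στ-orbit, i.e., the subgroup of permutations of [n] generated by the object permutations of σ and τ acts transitively on [n]. Then there exists a good basis (x_{ij}) for (𝒞ₙ,σ) such that the transition coefficients a_{ij} of σ and b_{ij} of τ are all n-th roots of unity (a_{ij}ⁿ = b_{ij}ⁿ = 1 for all i,j). -/

import Mathlib

open CategoryTheory

/-- The category `𝒞ₙ`: objects are `Fin n`, every hom-space is the one-dimensional
`K`-vector space `K`, and composition is multiplication in `K` (so the identity of
every object is `1 : K`). -/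
def Cn (K : Type) (n : ℕ) : Type := Fin n

section CnSetup

variable {K : Type} [Field K] {n : ℕ}

instance : Category (Cn K n) where
  Hom _ _ := K
  id _ := (1 : K)
  comp f g := @HMul.hMul K K K _ f g
  id_comp f := @one_mul K _ f
  comp_id f := @mul_one K _ f
  assoc f g h := @mul_assoc K _ f g h

instance : Preadditive (Cn K n) where
  homGroup _ _ := inferInstanceAs (AddCommGroup K)
  add_comp _ _ _ f f' g := @add_mul K _ _ _ f f' g
  comp_add _ _ _ f g g' := @mul_add K _ _ _ f g g'

instance : CategoryTheory.Linear K (Cn K n) where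
  homModule _ _ := inferInstanceAs (Module K K)
  smul_comp _ _ _ r f g := @smul_mul_assoc K K _ _ _ r f g
  comp_smul _ _ _ f r g := @mul_smul_comm K K _ _ _ r f g

/-- The morphism `X ⟶ Y` of `𝒞ₙ` given by the scalar `r`.  In particular
`CnHom j i 1` is the canonical basic morphism `x_{ij} : j ⟶ i`. -/
def CnHom (X Y : Cn K n) (r : K) : X ⟶ Y := r

/-- The scalar underlying a morphism of `𝒞ₙ`. -/
def toK {X Y : Cn K n} (f : X ⟶ Y) : K := f

end CnSetup

/-- A functor between `K`-linear categories is `K`-linear if it is additive on hom-spaces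
and commutes with the action of `K` on hom-spaces. -/
def IsKLinearFunctor (K : Type) [Field K] {C D : Type*} [Category C] [Category D]
    [Preadditive C] [Preadditive D] [CategoryTheory.Linear K C] [CategoryTheory.Linear K D]
    (F : C ⥤ D) : Prop :=
  (∀ (X Y : C) (f g : X ⟶ Y), F.map (f + g) = F.map f + F.map g) ∧
  (∀ (X Y : C) (r : K) (f : X ⟶ Y), F.map (r • f) = r • F.map f)

/-- `i` and `j` lie in the same orbit of the permutation `π`. -/
def SameOrbit {N : ℕ} (π : Equiv.Perm (Fin N)) (i j : Fin N) : Prop :=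
  ∃ k : ℕ, (π ^ k) i = j

/-- The number of elements of the orbit of `i` under the permutation `π`. -/
noncomputable def orbitSize {N : ℕ} (π : Equiv.Perm (Fin N)) (i : Fin N) : ℕ :=
  Set.ncard {j | SameOrbit π i j}

/-- `x` is a multiplicative basis for `𝒞_N` whose transition coefficients for the
`K`-linear automorphism `σ` (with underlying object permutation `σp`) are the scalars
`a i j` (i.e. `σ (x_{ij}) = a_{ij} • x_{σ(i) σ(j)}`), and these coefficients equal `1`
whenever `i` and `j` lie in the same `σp`-orbit: a *good basis* for `(𝒞_N, σ)`. -/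
def IsGoodBasis {K : Type} [Field K] {N : ℕ} (σ : Cn K N ⥤ Cn K N)
    (σp : Equiv.Perm (Fin N)) (x a : Cn K N → Cn K N → K) : Prop :=
  (∀ i j, x i j ≠ 0) ∧ (∀ i j k, x i j * x j k = x i k) ∧ (∀ i j, a i j ≠ 0) ∧
  (∀ i j : Cn K N, σ.map (CnHom j i (x i j)) =
    CnHom (σ.obj j) (σ.obj i) (a i j * x (σp i) (σp j))) ∧
  (∀ i j : Fin N, SameOrbit σp i j → a i j = 1)

section Aux
variable {K : Type} [Field K] {n : ℕ}

lemma homext {X Y : Cn K n} (f g : X ⟶ Y) (h : toK f = toK g) : f = g := h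
lemma toK_eqToHom {X Y : Cn K n} (h : X = Y) : toK (eqToHom h) = 1 := by subst h; rfl
lemma toK_comp {X Y Z : Cn K n} (f : X ⟶ Y) (g : Y ⟶ Z) : toK (f ≫ g) = toK f * toK g := rfl
lemma smul_CnHom (X Y : Cn K n) (r s : K) : r • CnHom X Y s = CnHom X Y (r * s) := rfl

lemma map_CnHom (F : Cn K n ⥤ Cn K n) (hF : IsKLinearFunctor K F) (X Y : Cn K n) (r : K) :
    toK (F.map (CnHom X Y r)) = r * toK (F.map (CnHom X Y 1)) := by
  have := hF.2 X Y r (CnHom X Y 1)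
  rw [smul_CnHom, mul_one] at this
  rw [this]; rfl

lemma toK_congr {F G : Cn K n ⥤ Cn K n} (h : F = G) {X Y : Cn K n} (f : X ⟶ Y) :
    toK (F.map f) = toK (G.map f) := by
  have := Functor.congr_hom h f
  rw [this, toK_comp, toK_comp, toK_eqToHom, toK_eqToHom, one_mul, mul_one]

/-- multiplicativity of the scalar of a functor -/
lemma map_mul_scalar (F : Cn K n ⥤ Cn K n) (i j k : Cn K n) :
    toK (F.map (CnHom j i 1)) * toK (F.map (CnHom k j 1)) = toK (F.map (CnHom k i 1)) := by
  have h1 : CnHom k j (1:K) ≫ CnHom j i 1 = CnHom k i 1 := by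
    apply homext; show (1:K) * 1 = 1; rw [one_mul]
  have h2 := F.map_comp (CnHom k j (1:K)) (CnHom j i 1)
  rw [h1] at h2
  rw [h2, toK_comp, mul_comm]

lemma prod_shift (f : ℕ → K) (m : ℕ) (hf : f m = f 0) (h0 : f 0 ≠ 0) :
    ∏ j ∈ Finset.range m, f (j+1) = ∏ j ∈ Finset.range m, f j := by
  have h1 := Finset.prod_range_succ' f m
  have h2 := Finset.prod_range_succ f m
  rw [hf] at h2
  exact mul_right_cancel₀ h0 (h1.symm.trans h2)

lemma toK_CnHom' (X Y : Cn K n) (r : K) : toK (CnHom X Y r) = r := rfl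

lemma toK_map_id (F : Cn K n ⥤ Cn K n) (X : Cn K n) : toK (F.map (CnHom X X 1)) = 1 := by
  have h : CnHom X X 1 = 𝟙 X := rfl
  rw [h, F.map_id]; rfl

end Aux

/-- **Proposition (single `στ`-orbit: all coefficients are `n`-th roots of unity).**  Let
`K` be algebraically closed and `σ, τ` commuting `K`-linear automorphisms of `𝒞ₙ` whose
object permutations generate a transitive subgroup.  Then there exists a good basis for
`(𝒞ₙ, σ)` such that the transition coefficients of `σ` and of `τ` are all `n`-th roots of
unity. -/
theorem stmt17 (K : Type) [Field K] [IsAlgClosed K] (n : ℕ)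
    (σ τ : Cn K n ⥤ Cn K n)
    (hσl : IsKLinearFunctor K σ) (hτl : IsKLinearFunctor K τ)
    (hσa : ∃ σ' : Cn K n ⥤ Cn K n, σ ⋙ σ' = 𝟭 (Cn K n) ∧ σ' ⋙ σ = 𝟭 (Cn K n))
    (hτa : ∃ τ' : Cn K n ⥤ Cn K n, τ ⋙ τ' = 𝟭 (Cn K n) ∧ τ' ⋙ τ = 𝟭 (Cn K n))
    (hcomm : σ ⋙ τ = τ ⋙ σ)
    (σp τp : Equiv.Perm (Fin n))
    (hobjσ : ∀ i : Cn K n, σ.obj i = σp i) (hobjτ : ∀ i : Cn K n, τ.obj i = τp i)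
    (htrans : ∀ i j : Fin n,
      ∃ g ∈ Subgroup.closure ({σp, τp} : Set (Equiv.Perm (Fin n))), g i = j) :
    ∃ x a b : Cn K n → Cn K n → K,
      IsGoodBasis σ σp x a ∧
      (∀ i j, b i j ≠ 0) ∧
      (∀ i j : Cn K n, τ.map (CnHom j i (x i j)) =
        CnHom (τ.obj j) (τ.obj i) (b i j * x (τp i) (τp j))) ∧
      (∀ i j : Fin n, a i j ^ n = 1) ∧ (∀ i j : Fin n, b i j ^ n = 1) := by
  classical
  rcases Nat.eq_zero_or_pos n with hn0 | hn
  · subst hn0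
    exact ⟨fun _ _ => 1, fun _ _ => 1, fun _ _ => 1,
      ⟨fun i => Fin.elim0 i, fun i => Fin.elim0 i, fun i => Fin.elim0 i,
       fun i => Fin.elim0 i, fun i => Fin.elim0 i⟩,
      fun i => Fin.elim0 i, fun i => Fin.elim0 i, fun i => Fin.elim0 i, fun i => Fin.elim0 i⟩
  obtain ⟨n', hn'⟩ : ∃ n', n = n' + 1 := ⟨n - 1, (Nat.succ_pred_eq_of_pos hn).symm⟩
  set o : Fin n := ⟨0, hn⟩ with ho
  set G := Subgroup.closure ({σp, τp} : Set (Equiv.Perm (Fin n))) with hGdef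
  have hmemσ : σp ∈ G := Subgroup.subset_closure (by simp)
  have hmemτ : τp ∈ G := Subgroup.subset_closure (by simp)
  -- object permutations commute
  have hPQ : Commute σp τp := by
    ext i
    have h1 := Functor.congr_obj hcomm i
    change τ.obj (σ.obj i) = σ.obj (τ.obj i) at h1
    rw [hobjτ (σ.obj i), hobjσ i, hobjσ (τ.obj i), hobjτ i] at h1
    simp only [Equiv.Perm.mul_apply]
    exact congrArg Fin.val h1.symm
  -- the closure is abelian
  have hgen : ∀ g ∈ G, Commute σp g ∧ Commute τp g := by
    intro g hg
    induction hg using Subgroup.closure_induction with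
    | mem x hx =>
      rcases hx with rfl | hx
      · exact ⟨Commute.refl _, hPQ.symm⟩
      · rw [Set.mem_singleton_iff] at hx; subst hx
        exact ⟨hPQ, Commute.refl _⟩
    | one => exact ⟨Commute.one_right _, Commute.one_right _⟩
    | mul x y hx hy ihx ihy => exact ⟨ihx.1.mul_right ihy.1, ihx.2.mul_right ihy.2⟩
    | inv x hx ih => exact ⟨ih.1.inv_right, ih.2.inv_right⟩
  have hGcomm : ∀ g ∈ G, ∀ h ∈ G, Commute g h := by
    intro g hg
    induction hg using Subgroup.closure_induction with
    | mem x hx =>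
      intro h hh
      rcases hx with rfl | hx
      · exact (hgen h hh).1
      · rw [Set.mem_singleton_iff] at hx; subst hx; exact (hgen h hh).2
    | one => exact fun h hh => Commute.one_left _
    | mul x y hx hy ihx ihy => exact fun h hh => (ihx h hh).mul_left (ihy h hh)
    | inv x hx ih => exact fun h hh => (ih h hh).inv_left
  -- freeness
  have hfree : ∀ g ∈ G, ∀ i : Fin n, g i = i → g = 1 := by
    intro g hg i hi
    ext j
    obtain ⟨h, hh, hhi⟩ := htrans i j
    have hc := hGcomm g hg h hh
    have key : g j = j := by
      calc g j = g (h i) := by rw [hhi]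
      _ = (g * h) i := rfl
      _ = (h * g) i := by rw [hc.eq]
      _ = h (g i) := rfl
      _ = j := by rw [hi, hhi]
    simp [key]
  -- cardinality
  have hbij : Function.Bijective (fun g : G => (g : Equiv.Perm (Fin n)) o) := by
    constructor
    · rintro ⟨g, hg⟩ ⟨h, hh⟩ hgh
      simp only at hgh
      have h0 : (h⁻¹ * g) o = o := by
        simp [Equiv.Perm.mul_apply, hgh]
      have h1 := hfree _ (mul_mem (inv_mem hh) hg) o h0
      have h2 : g = h := by
        have := inv_mul_eq_one.mp h1; exact this.symm ▸ rfl
      exact Subtype.ext h2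
    · intro i
      obtain ⟨g, hg, hgo⟩ := htrans o i
      exact ⟨⟨g, hg⟩, hgo⟩
  have hcard : Nat.card G = n := by
    rw [Nat.card_eq_of_bijective _ hbij, Nat.card_eq_fintype_card, Fintype.card_fin]
  have hpowG : ∀ g ∈ G, g ^ n = 1 := by
    intro g hg
    have h1 : (⟨g, hg⟩ : G) ^ Nat.card G = 1 := pow_card_eq_one'
    rw [hcard] at h1
    have h2 := congrArg (Subtype.val) h1
    simpa using h2
  have hPn : σp ^ n = 1 := hpowG _ hmemσ
  have hQn : τp ^ n = 1 := hpowG _ hmemτ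
  -- normal form
  have hinvpow : ∀ (x : Equiv.Perm (Fin n)), x ^ n = 1 → ∀ a : ℕ, (x ^ a)⁻¹ = x ^ (a * n') := by
    intro x hx a
    have h2 : x ^ (a * n') * x ^ a = 1 := by
      rw [← pow_add]
      have h3 : a * n' + a = a * n := by rw [hn']; ring
      rw [h3, mul_comm a n, pow_mul, hx, one_pow]
    exact inv_eq_of_mul_eq_one_left h2
  have hnf : ∀ g ∈ G, ∃ a b : ℕ, g = σp ^ a * τp ^ b := by
    intro g hg
    induction hg using Subgroup.closure_induction with
    | mem x hx =>
      rcases hx with rfl | hx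
      · exact ⟨1, 0, by simp⟩
      · rw [Set.mem_singleton_iff] at hx; subst hx; exact ⟨0, 1, by simp⟩
    | one => exact ⟨0, 0, by simp⟩
    | mul x y hx hy ihx ihy =>
      obtain ⟨a, b, rfl⟩ := ihx
      obtain ⟨a', b', rfl⟩ := ihy
      refine ⟨a + a', b + b', ?_⟩
      have hc : Commute (τp ^ b) (σp ^ a') := (hPQ.symm).pow_pow b a'
      rw [pow_add, pow_add]
      calc σp ^ a * τp ^ b * (σp ^ a' * τp ^ b')
          = σp ^ a * (τp ^ b * σp ^ a') * τp ^ b' := by group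
        _ = σp ^ a * (σp ^ a' * τp ^ b) * τp ^ b' := by rw [hc.eq]
        _ = σp ^ a * σp ^ a' * (τp ^ b * τp ^ b') := by group
    | inv x hx ih =>
      obtain ⟨a, b, rfl⟩ := ih
      refine ⟨a * n', b * n', ?_⟩
      rw [mul_inv_rev, hinvpow σp hPn a, hinvpow τp hQn b]
      exact ((hPQ.pow_pow (a * n') (b * n')).symm).eq
  -- commuting powers applied pointwise
  have hswap : ∀ (a b : ℕ) (x : Fin n), (σp ^ a) ((τp ^ b) x) = (τp ^ b) ((σp ^ a) x) := by
    intro a b x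
    rw [← Equiv.Perm.mul_apply, ← Equiv.Perm.mul_apply, (hPQ.pow_pow a b).eq]
  have hswap1 : ∀ x : Fin n, τp (σp x) = σp (τp x) := by
    intro x
    have := hswap 1 1 x
    simpa using this.symm
  -- the order of σp
  set m := orderOf σp with hm
  have hmpos : 0 < m := orderOf_pos σp
  have hmn : m ∣ n := orderOf_dvd_of_pow_eq_one hPn
  have hPm : σp ^ m = 1 := pow_orderOf_eq_one σp
  -- injectivity on orbits
  have hPinj : ∀ (a a' : ℕ), a < m → a' < m → ∀ i : Fin n, (σp ^ a) i = (σp ^ a') i → a = a' := by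
    have key : ∀ (a a' : ℕ), a' ≤ a → a < m → ∀ i : Fin n, (σp ^ a) i = (σp ^ a') i → a = a' := by
      intro a a' hle ha i h
      have h1 : (σp ^ (a - a')) ((σp ^ a') i) = (σp ^ a') i := by
        rw [← Equiv.Perm.mul_apply, ← pow_add, Nat.sub_add_cancel hle, h]
      have h2 : σp ^ (a - a') = 1 := hfree _ (pow_mem hmemσ _) _ h1
      have h3 : m ∣ a - a' := orderOf_dvd_of_pow_eq_one h2
      have h4 : a - a' = 0 := Nat.eq_zero_of_dvd_of_lt h3 (by omega) |>.symm ▸ rfl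
      omega
    intro a a' ha ha' i h
    rcases le_total a' a with hle | hle
    · exact key a a' hle ha i h
    · exact (key a' a hle ha' i h.symm).symm
  -- definition of r
  have hEx : ∃ b, 0 < b ∧ ∃ l : ℕ, (τp ^ b) o = (σp ^ l) o := by
    refine ⟨n, hn, 0, ?_⟩
    rw [hQn, pow_zero]
  set r := Nat.find hEx with hrdef
  obtain ⟨hrpos, l, hl⟩ := Nat.find_spec hEx
  have hrmin : ∀ b, 0 < b → b < r → ¬∃ l : ℕ, (τp ^ b) o = (σp ^ l) o := by
    intro b hb hbr hex
    exact Nat.find_min hEx hbr ⟨hb, hex⟩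
  -- uniqueness of representatives
  have huniq : ∀ (a b a' b' : ℕ), a < m → b < r → a' < m → b' < r →
      (σp ^ a) ((τp ^ b) o) = (σp ^ a') ((τp ^ b') o) → a = a' ∧ b = b' := by
    intro a b a' b' ha hb ha' hb' h
    have hgG : ∀ (x y : ℕ), σp ^ x * τp ^ y ∈ G := fun x y =>
      mul_mem (pow_mem hmemσ _) (pow_mem hmemτ _)
    have hgg : σp ^ a * τp ^ b = σp ^ a' * τp ^ b' := by
      have h0 : ((σp ^ a' * τp ^ b')⁻¹ * (σp ^ a * τp ^ b)) o = o := by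
        have h01 : (σp ^ a * τp ^ b) o = (σp ^ a' * τp ^ b') o := by
          rw [Equiv.Perm.mul_apply, Equiv.Perm.mul_apply]; exact h
        rw [Equiv.Perm.mul_apply, h01, Equiv.Perm.inv_def, Equiv.symm_apply_apply]
      have h1 := hfree _ (mul_mem (inv_mem (hgG a' b')) (hgG a b)) o h0
      exact (inv_mul_eq_one.mp h1).symm
    have keyb : ∀ (x y x' y' : ℕ), y' ≤ y → y < r →
        σp ^ x * τp ^ y = σp ^ x' * τp ^ y' → y = y' := by
      intro x y x' y' hle hy hxy
      by_contra hne
      have hpos : 0 < y - y' := by omega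
      have h2 : σp ^ x * τp ^ (y - y') = σp ^ x' := by
        have : σp ^ x * (τp ^ (y - y') * τp ^ y') = σp ^ x' * τp ^ y' := by
          rw [← pow_add, Nat.sub_add_cancel hle]; exact hxy
        rw [← mul_assoc] at this
        exact mul_right_cancel this
      have h3 : τp ^ (y - y') = σp ^ (x * n') * σp ^ x' := by
        rw [← hinvpow σp hPn x, ← h2]; group
      have h4 : (τp ^ (y - y')) o = (σp ^ (x * n' + x')) o := by
        rw [h3, ← pow_add]
      exact hrmin _ hpos (by omega) ⟨_, h4⟩
    have hbb : b = b' := by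
      rcases le_total b' b with hle | hle
      · exact keyb a b a' b' hle hb hgg
      · exact (keyb a' b' a b hle hb' hgg.symm).symm
    subst hbb
    have haa : σp ^ a = σp ^ a' := mul_right_cancel hgg
    refine ⟨hPinj a a' ha ha' o ?_, rfl⟩
    rw [haa]
  -- reduction and covering
  have hred : ∀ (b₀ : ℕ), ∀ (a₀ : ℕ), ∃ a b, b < r ∧
      (σp ^ a) ((τp ^ b) o) = (σp ^ a₀) ((τp ^ b₀) o) := by
    intro b₀
    induction b₀ using Nat.strong_induction_on with
    | _ b₀ ih =>
      intro a₀
      by_cases hb : b₀ < r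
      · exact ⟨a₀, b₀, hb, rfl⟩
      · push_neg at hb
        have h1 : (τp ^ b₀) o = (σp ^ l) ((τp ^ (b₀ - r)) o) := by
          have h2 : τp ^ b₀ = τp ^ (b₀ - r) * τp ^ r := by
            rw [← pow_add]; congr 1; omega
          rw [h2, Equiv.Perm.mul_apply, hl, ← hswap]
        obtain ⟨a, b, hbr, heq⟩ := ih (b₀ - r) (by omega) (a₀ + l)
        refine ⟨a, b, hbr, ?_⟩
        rw [heq, h1, pow_add, Equiv.Perm.mul_apply]
  have hcov : ∀ i : Fin n, ∃ a b, a < m ∧ b < r ∧ (σp ^ a) ((τp ^ b) o) = i := by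
    intro i
    obtain ⟨g, hg, hgo⟩ := htrans o i
    obtain ⟨a₀, b₀, rfl⟩ := hnf g hg
    obtain ⟨a, b, hbr, heq⟩ := hred b₀ a₀
    refine ⟨a % m, b, Nat.mod_lt _ hmpos, hbr, ?_⟩
    rw [hm, pow_mod_orderOf, heq, ← hgo, Equiv.Perm.mul_apply]
  choose A B hAm hBr hAB using hcov
  have huniqAB : ∀ (i : Fin n) (a b : ℕ), a < m → b < r →
      (σp ^ a) ((τp ^ b) o) = i → A i = a ∧ B i = b := by
    intro i a b ha hb h
    exact huniq (A i) (B i) a b (hAm i) (hBr i) ha hb (by rw [hAB i, h])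
  have hBo : B o = 0 ∧ A o = 0 := by
    have := huniqAB o 0 0 hmpos hrpos (by simp)
    exact ⟨this.2, this.1⟩
  -- scalar coefficients of the functors
  obtain ⟨S, hSdef⟩ : ∃ S : Fin n → Fin n → K,
      S = fun i j => toK (σ.map (CnHom j i 1)) := ⟨_, rfl⟩
  obtain ⟨T, hTdef⟩ : ∃ T : Fin n → Fin n → K,
      T = fun i j => toK (τ.map (CnHom j i 1)) := ⟨_, rfl⟩
  have hSmul : ∀ i j k : Fin n, S i j * S j k = S i k := by
    intro i j k; rw [hSdef]; exact map_mul_scalar σ i j k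
  have hTmul : ∀ i j k : Fin n, T i j * T j k = T i k := by
    intro i j k; rw [hTdef]; exact map_mul_scalar τ i j k
  have hSid : ∀ i : Fin n, S i i = 1 := by
    intro i
    rw [hSdef]; exact toK_map_id σ i
  have hTid : ∀ i : Fin n, T i i = 1 := by
    intro i
    rw [hTdef]; exact toK_map_id τ i
  have hSne : ∀ i j, S i j ≠ 0 := by
    intro i j h
    have := hSmul i j i
    rw [h, hSid, zero_mul] at this
    exact zero_ne_one this
  have hTne : ∀ i j, T i j ≠ 0 := by
    intro i j h
    have := hTmul i j i
    rw [h, hTid, zero_mul] at this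
    exact zero_ne_one this
  -- the basic scalars u, v
  obtain ⟨u, hudef⟩ : ∃ u : Fin n → K, u = fun i => S i o := ⟨_, rfl⟩
  obtain ⟨v, hvdef⟩ : ∃ v : Fin n → K, v = fun i => T i o := ⟨_, rfl⟩
  have hune : ∀ i, u i ≠ 0 := by intro i; rw [hudef]; exact hSne i o
  have hvne : ∀ i, v i ≠ 0 := by intro i; rw [hvdef]; exact hTne i o
  have hSu : ∀ i j, S i j * u j = u i := by
    intro i j; rw [hudef]; exact hSmul i j o
  have hTv : ∀ i j, T i j * v j = v i := by
    intro i j; rw [hvdef]; exact hTmul i j o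
  -- the commutation relation on scalars
  have hcommS : ∀ i j : Fin n, S i j * T (σp i) (σp j) = T i j * S (τp i) (τp j) := by
    intro i j
    have h := toK_congr hcomm (CnHom j i 1)
    have hL : toK ((σ ⋙ τ).map (CnHom j i 1)) = S i j * T (σp i) (σp j) := by
      show toK (τ.map (σ.map (CnHom j i 1))) = _
      have : σ.map (CnHom j i 1) = CnHom (σ.obj j) (σ.obj i) (S i j) := by
        apply homext; rw [hSdef]; rfl
      rw [this, map_CnHom τ hτl, hTdef]
      simp only
      rw [hobjσ i, hobjσ j]
    have hR : toK ((τ ⋙ σ).map (CnHom j i 1)) = T i j * S (τp i) (τp j) := by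
      show toK (σ.map (τ.map (CnHom j i 1))) = _
      have : τ.map (CnHom j i 1) = CnHom (τ.obj j) (τ.obj i) (T i j) := by
        apply homext; rw [hTdef]; rfl
      rw [this, map_CnHom σ hσl, hSdef]
      simp only
      rw [hobjτ i, hobjτ j]
    rw [← hL, ← hR, h]
  have huo : u o = 1 := by rw [hudef]; exact hSid o
  have hvo : v o = 1 := by rw [hvdef]; exact hTid o
  -- the constant κ
  have hκmul : ∀ i, u i * v (σp i) * u (τp o) = v i * u (τp i) * v (σp o) := by
    intro i
    have h := hcommS i o
    have e1 : S i o = u i := by have := hSu i o; rwa [huo, mul_one] at this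
    have e2 : T i o = v i := by have := hTv i o; rwa [hvo, mul_one] at this
    have e3 : T (σp i) (σp o) * v (σp o) = v (σp i) := hTv _ _
    have e4 : S (τp i) (τp o) * u (τp o) = u (τp i) := hSu _ _
    calc u i * v (σp i) * u (τp o)
        = S i o * (T (σp i) (σp o) * v (σp o)) * u (τp o) := by rw [e1, e3]
      _ = (T i o * S (τp i) (τp o)) * (v (σp o) * u (τp o)) := by rw [← h]; ring
      _ = v i * u (τp i) * v (σp o) := by rw [← e2, ← e4]; ring
  obtain ⟨κ, hκdef⟩ : ∃ κ : K, κ = v (σp o) / u (τp o) := ⟨_, rfl⟩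
  have hκne : κ ≠ 0 := by rw [hκdef]; exact div_ne_zero (hvne _) (hune _)
  have hκ : ∀ i, u i * v (σp i) = κ * (v i * u (τp i)) := by
    intro i
    rw [hκdef, div_mul_eq_mul_div, eq_div_iff (hune _)]
    linear_combination hκmul i
  have hκn : κ ^ n = 1 := by
    have hprod : ∏ i : Fin n, (u i * v (σp i)) = ∏ i : Fin n, (κ * (v i * u (τp i))) :=
      Finset.prod_congr rfl (fun i _ => hκ i)
    rw [Finset.prod_mul_distrib, Finset.prod_mul_distrib, Finset.prod_mul_distrib] at hprod
    rw [Equiv.prod_comp σp v, Equiv.prod_comp τp u] at hprod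
    rw [Finset.prod_const, Finset.card_univ, Fintype.card_fin] at hprod
    have hune' : ∏ i : Fin n, u i ≠ 0 := Finset.prod_ne_zero_iff.mpr (fun i _ => hune i)
    have hvne' : ∏ i : Fin n, v i ≠ 0 := Finset.prod_ne_zero_iff.mpr (fun i _ => hvne i)
    have h3 : (κ ^ n) * ((∏ i : Fin n, v i) * (∏ i : Fin n, u i)) =
        1 * ((∏ i : Fin n, v i) * (∏ i : Fin n, u i)) := by
      rw [one_mul, ← hprod]; ring
    exact mul_right_cancel₀ (mul_ne_zero hvne' hune') h3
  -- orbit products and their roots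
  obtain ⟨Pk, hPkdef⟩ : ∃ Pk : ℕ → K,
      Pk = fun b => ∏ j ∈ Finset.range m, u ((σp ^ j) ((τp ^ b) o)) := ⟨_, rfl⟩
  have hPkne : ∀ b, Pk b ≠ 0 := by
    intro b; rw [hPkdef]
    exact Finset.prod_ne_zero_iff.mpr (fun j _ => hune _)
  have hlamEx : ∀ b : ℕ, ∃ z : K, z ^ m = Pk b := fun b =>
    IsAlgClosed.exists_pow_nat_eq (Pk b) hmpos
  choose lam hlam using hlamEx
  have hlamne : ∀ b, lam b ≠ 0 := by
    intro b h
    exact hPkne b (by rw [← hlam b, h, zero_pow hmpos.ne'])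
  -- the recursion for Pk
  have hPkrec : ∀ b : ℕ, Pk b = κ ^ m * Pk (b + 1) := by
    intro b
    have hstep : ∀ j : ℕ, (σp ^ j) ((τp ^ (b+1)) o) = τp ((σp ^ j) ((τp ^ b) o)) := by
      intro j
      have e1 : (τp ^ (b+1)) o = τp ((τp ^ b) o) := by
        rw [pow_succ', Equiv.Perm.mul_apply]
      rw [e1]
      have e2 := hswap j 1 ((τp ^ b) o)
      simpa using e2
    have h1 : ∀ j ∈ Finset.range m,
        u ((σp ^ j) ((τp ^ b) o)) * v (σp ((σp ^ j) ((τp ^ b) o))) =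
        κ * (v ((σp ^ j) ((τp ^ b) o)) * u ((σp ^ j) ((τp ^ (b+1)) o))) := by
      intro j _
      rw [hstep j]
      exact hκ _
    have h2 := Finset.prod_congr rfl h1
    rw [Finset.prod_mul_distrib, Finset.prod_mul_distrib, Finset.prod_mul_distrib,
      Finset.prod_const] at h2
    -- the shifted product of v equals the unshifted one
    have h3 : ∏ j ∈ Finset.range m, v (σp ((σp ^ j) ((τp ^ b) o))) =
        ∏ j ∈ Finset.range m, v ((σp ^ j) ((τp ^ b) o)) := by
      have h4 : ∀ j : ℕ, v (σp ((σp ^ j) ((τp ^ b) o))) = v ((σp ^ (j+1)) ((τp ^ b) o)) := by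
        intro j
        rw [pow_succ', Equiv.Perm.mul_apply]
      simp only [h4]
      apply prod_shift (fun j => v ((σp ^ j) ((τp ^ b) o))) m
      · show v ((σp ^ m) ((τp ^ b) o)) = v ((σp ^ 0) ((τp ^ b) o))
        rw [hPm, pow_zero]
      · exact hvne _
    rw [h3] at h2
    have h5 : (∏ j ∈ Finset.range m, v ((σp ^ j) ((τp ^ b) o))) ≠ 0 :=
      Finset.prod_ne_zero_iff.mpr (fun j _ => hvne _)
    rw [hPkdef]
    simp only
    apply mul_right_cancel₀ h5
    calc (∏ j ∈ Finset.range m, u ((σp ^ j) ((τp ^ b) o))) *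
          ∏ j ∈ Finset.range m, v ((σp ^ j) ((τp ^ b) o))
        = κ ^ (Finset.range m).card *
          ((∏ j ∈ Finset.range m, v ((σp ^ j) ((τp ^ b) o))) *
           ∏ j ∈ Finset.range m, u ((σp ^ j) ((τp ^ (b+1)) o))) := h2
      _ = κ ^ m * (∏ j ∈ Finset.range m, u ((σp ^ j) ((τp ^ (b+1)) o))) *
          ∏ j ∈ Finset.range m, v ((σp ^ j) ((τp ^ b) o)) := by
          rw [Finset.card_range]; ring
  -- lam ^ n is constant
  obtain ⟨q, hq⟩ := hmn
  have hlamn : ∀ b, lam b ^ n = Pk b ^ q := by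
    intro b; rw [hq, pow_mul, hlam]
  have hlamconst : ∀ b, lam b ^ n = lam 0 ^ n := by
    intro b
    induction b with
    | zero => rfl
    | succ b ih =>
      rw [← ih, hlamn, hlamn]
      have : Pk b ^ q = (κ ^ m) ^ q * Pk (b+1) ^ q := by
        rw [← mul_pow, ← hPkrec]
      rw [this, ← pow_mul, ← hq, hκn, one_mul]
  -- the constant β
  obtain ⟨W, hWdef⟩ : ∃ W : K,
      W = lam 0 ^ l * (∏ k ∈ Finset.range r, v ((τp ^ k) o)) /
          (∏ j ∈ Finset.range l, u ((σp ^ j) o)) := ⟨_, rfl⟩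
  have hWne : W ≠ 0 := by
    rw [hWdef]
    apply div_ne_zero
    · exact mul_ne_zero (pow_ne_zero _ (hlamne 0))
        (Finset.prod_ne_zero_iff.mpr (fun k _ => hvne _))
    · exact Finset.prod_ne_zero_iff.mpr (fun j _ => hune _)
  obtain ⟨β, hβ⟩ : ∃ β : K, β ^ (r * n) = W ^ n :=
    IsAlgClosed.exists_pow_nat_eq (W ^ n) (Nat.mul_pos hrpos hn)
  have hβne : β ≠ 0 := by
    intro h
    rw [h, zero_pow (Nat.mul_pos hrpos hn).ne'] at hβ
    exact pow_ne_zero _ hWne hβ.symm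
  -- base scalars γ along the τ-direction
  obtain ⟨γ, hγdef⟩ : ∃ γ : ℕ → K,
      γ = fun b => (∏ j ∈ Finset.range b, v ((τp ^ j) o)) / β ^ b := ⟨_, rfl⟩
  have hγne : ∀ b, γ b ≠ 0 := by
    intro b; rw [hγdef]
    exact div_ne_zero (Finset.prod_ne_zero_iff.mpr (fun j _ => hvne _)) (pow_ne_zero _ hβne)
  have hγrec : ∀ b : ℕ, γ (b+1) * β = γ b * v ((τp ^ b) o) := by
    intro b
    rw [hγdef]
    simp only
    rw [Finset.prod_range_succ, pow_succ]
    field_simp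
  -- the multiplicative-basis scalars c
  obtain ⟨c, hcdef⟩ : ∃ c : Fin n → K,
      c = fun i => γ (B i) * (∏ j ∈ Finset.range (A i), u ((σp ^ j) ((τp ^ (B i)) o))) /
          lam (B i) ^ (A i) := ⟨_, rfl⟩
  have hcne : ∀ i, c i ≠ 0 := by
    intro i; rw [hcdef]
    exact div_ne_zero (mul_ne_zero (hγne _)
      (Finset.prod_ne_zero_iff.mpr (fun j _ => hune _))) (pow_ne_zero _ (hlamne _))
  have hco : c o = 1 := by
    rw [hcdef]
    simp only [hBo.1, hBo.2]
    rw [hγdef]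
    simp
  -- key recursion for c along σ-orbits
  have hkeyA : ∀ i : Fin n, B (σp i) = B i ∧ lam (B i) * c (σp i) = c i * u i := by
    intro i
    have hσi : (σp ^ (A i + 1)) ((τp ^ (B i)) o) = σp i := by
      rw [pow_succ', Equiv.Perm.mul_apply, hAB i]
    by_cases hA1 : A i + 1 < m
    · obtain ⟨hA', hB'⟩ := huniqAB (σp i) (A i + 1) (B i) hA1 (hBr i) hσi
      constructor
      · exact hB'
      · rw [hcdef]
        simp only [hA', hB']
        rw [Finset.prod_range_succ, hAB i, pow_succ]
        field_simp
        rw [div_eq_div_iff (mul_ne_zero (hlamne _) (pow_ne_zero _ (hlamne _)))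
          (pow_ne_zero _ (hlamne _))]
        ring
    · have hAm' : A i + 1 = m := by have := hAm i; omega
      have hσi' : (σp ^ 0) ((τp ^ (B i)) o) = σp i := by
        rw [pow_zero]
        show (τp ^ B i) o = σp i
        rw [← hσi, hAm', hPm]
        rfl
      obtain ⟨hA', hB'⟩ := huniqAB (σp i) 0 (B i) hmpos (hBr i) hσi'
      constructor
      · exact hB'
      · rw [hcdef]
        simp only [hA', hB']
        rw [pow_zero, Finset.prod_range_zero]
        -- c (σp i) = γ (B i) ; c i * u i = γ (B i) * Pk (B i) / lam (B i) ^ (A i)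
        have hPkB : (∏ j ∈ Finset.range (A i), u ((σp ^ j) ((τp ^ (B i)) o))) * u i =
            Pk (B i) := by
          rw [hPkdef]
          simp only
          rw [← hAm', Finset.prod_range_succ, hAB i]
        have hlamB := hlam (B i)
        rw [← hAm'] at hlamB
        rw [mul_one, div_one, div_mul_eq_mul_div, eq_div_iff (pow_ne_zero _ (hlamne (B i)))]
        calc lam (B i) * γ (B i) * lam (B i) ^ A i
            = γ (B i) * lam (B i) ^ (A i + 1) := by ring
          _ = γ (B i) * ((∏ j ∈ Finset.range (A i), u ((σp ^ j) ((τp ^ (B i)) o))) * u i) := by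
              rw [hlamB, ← hPkB]
          _ = γ (B i) * (∏ j ∈ Finset.range (A i), u ((σp ^ j) ((τp ^ (B i)) o))) * u i := by
              ring
  have hBσ : ∀ i, B (σp i) = B i := fun i => (hkeyA i).1
  have hcσ : ∀ i, lam (B i) * c (σp i) = c i * u i := fun i => (hkeyA i).2
  have hBpow : ∀ (k : ℕ) (i : Fin n), B ((σp ^ k) i) = B i := by
    intro k
    induction k with
    | zero => intro i; rw [pow_zero]; rfl
    | succ k ih =>
      intro i
      rw [pow_succ, Equiv.Perm.mul_apply, ih (σp i)]
      exact hBσ i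
  -- c along the σ-orbit of the base point
  have hBo0 : B o = 0 := hBo.1
  have hcl : ∀ k : ℕ, lam 0 ^ k * c ((σp ^ k) o) =
      ∏ j ∈ Finset.range k, u ((σp ^ j) o) := by
    intro k
    induction k with
    | zero => simp [hco]
    | succ k ih =>
      have h1 : (σp ^ (k+1)) o = σp ((σp ^ k) o) := by
        rw [pow_succ', Equiv.Perm.mul_apply]
      have h2 := hcσ ((σp ^ k) o)
      rw [hBpow k o, hBo0] at h2
      rw [h1, Finset.prod_range_succ, ← ih, pow_succ]
      calc lam 0 ^ k * lam 0 * c (σp ((σp ^ k) o))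
          = lam 0 ^ k * (lam 0 * c (σp ((σp ^ k) o))) := by ring
        _ = lam 0 ^ k * (c ((σp ^ k) o) * u ((σp ^ k) o)) := by rw [h2]
        _ = lam 0 ^ k * c ((σp ^ k) o) * u ((σp ^ k) o) := by ring
  -- the τ-transition scalars E
  obtain ⟨E, hEdef⟩ : ∃ E : Fin n → K, E = fun i => c i * v i / c (τp i) := ⟨_, rfl⟩
  have hEne : ∀ i, E i ≠ 0 := by
    intro i; rw [hEdef]
    exact div_ne_zero (mul_ne_zero (hcne _) (hvne _)) (hcne _)
  -- E changes by an n-th root of unity along σ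
  have hEσ : ∀ i, E (σp i) * lam (B i) = E i * κ * lam (B (τp i)) := by
    intro i
    have e1 : lam (B i) * c (σp i) = c i * u i := hcσ i
    have e2 : lam (B (τp i)) * c (σp (τp i)) = c (τp i) * u (τp i) := hcσ (τp i)
    have e3 : u i * v (σp i) = κ * (v i * u (τp i)) := hκ i
    rw [hEdef]
    simp only
    rw [hswap1 i]
    rw [div_mul_eq_mul_div, div_mul_eq_mul_div, div_mul_eq_mul_div, div_eq_div_iff (hcne _) (hcne _)]
    calc c (σp i) * v (σp i) * lam (B i) * c (τp i)
        = (lam (B i) * c (σp i)) * v (σp i) * c (τp i) := by ring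
      _ = (c i * u i) * v (σp i) * c (τp i) := by rw [e1]
      _ = c i * (u i * v (σp i)) * c (τp i) := by ring
      _ = c i * (κ * (v i * u (τp i))) * c (τp i) := by rw [e3]
      _ = (c i * v i * κ) * (c (τp i) * u (τp i)) := by ring
      _ = (c i * v i * κ) * (lam (B (τp i)) * c (σp (τp i))) := by rw [e2]
      _ = c i * v i * κ * lam (B (τp i)) * c (σp (τp i)) := by ring
  have hEσn : ∀ i, E (σp i) ^ n = E i ^ n := by
    intro i
    have h1 := congrArg (fun z => z ^ n) (hEσ i)
    simp only [mul_pow] at h1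
    rw [hκn, mul_one] at h1
    rw [hlamconst (B i), hlamconst (B (τp i))] at h1
    exact mul_right_cancel₀ (pow_ne_zero _ (hlamne 0)) h1
  have hEpowσ : ∀ (k : ℕ) (x : Fin n), E ((σp ^ k) x) ^ n = E x ^ n := by
    intro k
    induction k with
    | zero => intro x; rw [pow_zero]; rfl
    | succ k ih =>
      intro x
      rw [pow_succ', Equiv.Perm.mul_apply, hEσn, ih]
  -- base values of E
  have hcpk : ∀ b : ℕ, b < r → c ((τp ^ b) o) = γ b := by
    intro b hb
    obtain ⟨hA', hB'⟩ := huniqAB ((τp ^ b) o) 0 b hmpos hb (by rw [pow_zero]; rfl)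
    rw [hcdef]
    simp only [hA', hB']
    simp
  have hEbase : ∀ b : ℕ, b < r → E ((τp ^ b) o) ^ n = β ^ n := by
    intro b hb
    obtain ⟨e, he⟩ : ∃ e, r = e + 1 := ⟨r - 1, by omega⟩
    have hτpk : τp ((τp ^ b) o) = (τp ^ (b+1)) o := by
      rw [pow_succ', Equiv.Perm.mul_apply]
    by_cases hb1 : b + 1 < r
    · have hE : E ((τp ^ b) o) = β := by
        rw [hEdef]
        simp only
        rw [hτpk, hcpk b hb, hcpk (b+1) hb1]
        rw [div_eq_iff (hγne _), ← hγrec b]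
        ring
      rw [hE]
    · have hbe : b = e := by omega
      have hbr1 : b + 1 = r := by omega
      have hτr : τp ((τp ^ b) o) = (σp ^ l) o := by
        rw [hτpk, hbr1]
        exact hl
      have hc2 : c ((σp ^ l) o) * lam 0 ^ l = ∏ j ∈ Finset.range l, u ((σp ^ j) o) := by
        rw [mul_comm]; exact hcl l
      have hune2 : (∏ j ∈ Finset.range l, u ((σp ^ j) o)) ≠ 0 :=
        Finset.prod_ne_zero_iff.mpr (fun j _ => hune _)
      have hvprod : (∏ j ∈ Finset.range b, v ((τp ^ j) o)) * v ((τp ^ b) o) =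
          ∏ k ∈ Finset.range r, v ((τp ^ k) o) := by
        rw [← hbr1, Finset.prod_range_succ]
      have hEW : E ((τp ^ b) o) * β ^ b = W := by
        rw [hEdef]; simp only
        rw [hτr, hcpk b hb, hγdef]; simp only
        rw [hWdef]
        field_simp
        rw [hvprod, div_eq_iff (hcne _)]
        linear_combination (-(∏ k ∈ Finset.range r, v ((τp ^ k) o))) * hc2
      have hEn : E ((τp ^ b) o) ^ n * β ^ (b * n) = β ^ (r * n) := by
        rw [hβ, ← hEW, mul_pow, pow_mul]
      have hsplit : β ^ (r * n) = β ^ n * β ^ (b * n) := by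
        rw [← pow_add, ← hbr1, add_mul, one_mul, add_comm]
      rw [hsplit] at hEn
      exact mul_right_cancel₀ (pow_ne_zero _ hβne) hEn
  have hEpow : ∀ i : Fin n, E i ^ n = β ^ n := by
    intro i
    rw [← hAB i, hEpowσ]
    exact hEbase (B i) (hBr i)
  have hS' : ∀ i j : Fin n, toK (σ.map (CnHom j i 1)) = S i j := by
    intro i j; rw [hSdef]
  have hT' : ∀ i j : Fin n, toK (τ.map (CnHom j i 1)) = T i j := by
    intro i j; rw [hTdef]
  have hEc : ∀ i, E i * c (τp i) = c i * v i := by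
    intro i; rw [hEdef]; simp only
    exact div_mul_cancel₀ _ (hcne _)
  refine ⟨fun i j => c i / c j, fun i j => lam (B i) / lam (B j), fun i j => E i / E j,
    ⟨?_, ?_, ?_, ?_, ?_⟩, ?_, ?_, ?_, ?_⟩
  · intro i j; exact div_ne_zero (hcne i) (hcne j)
  · intro i j k
    show c i / c j * (c j / c k) = c i / c k
    rw [div_mul_div_comm, mul_comm (c i) (c j), mul_div_mul_left _ _ (hcne j)]
  · intro i j; exact div_ne_zero (hlamne _) (hlamne _)
  · intro i j
    apply homext
    rw [map_CnHom σ hσl, hS' i j, toK_CnHom']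
    show c i / c j * S i j = lam (B i) / lam (B j) * (c (σp i) / c (σp j))
    have e1 := hcσ i
    have e2 := hcσ j
    have e3 := hSu i j
    rw [div_mul_eq_mul_div, div_mul_div_comm,
      div_eq_div_iff (hcne j) (mul_ne_zero (hlamne _) (hcne _))]
    calc c i * S i j * (lam (B j) * c (σp j))
        = c i * S i j * (c j * u j) := by rw [e2]
      _ = (c i * c j) * (S i j * u j) := by ring
      _ = (c i * c j) * u i := by rw [e3]
      _ = (c i * u i) * c j := by ring
      _ = (lam (B i) * c (σp i)) * c j := by rw [e1]
  · intro i j hij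
    obtain ⟨k, hk⟩ := hij
    show lam (B i) / lam (B j) = 1
    rw [← hk, hBpow]
    exact div_self (hlamne _)
  · intro i j; exact div_ne_zero (hEne _) (hEne _)
  · intro i j
    apply homext
    rw [map_CnHom τ hτl, hT' i j, toK_CnHom']
    show c i / c j * T i j = E i / E j * (c (τp i) / c (τp j))
    rw [div_mul_eq_mul_div, div_mul_div_comm,
      div_eq_div_iff (hcne j) (mul_ne_zero (hEne j) (hcne (τp j)))]
    calc c i * T i j * (E j * c (τp j))
        = c i * T i j * (c j * v j) := by rw [hEc j]
      _ = (c i * c j) * (T i j * v j) := by ring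
      _ = (c i * c j) * v i := by rw [hTv i j]
      _ = (c i * v i) * c j := by ring
      _ = (E i * c (τp i)) * c j := by rw [hEc i]
  · intro i j
    show (lam (B i) / lam (B j)) ^ n = 1
    rw [div_pow, hlamconst (B i), hlamconst (B j), div_self (pow_ne_zero _ (hlamne 0))]
  · intro i j
    show (E i / E j) ^ n = 1
    rw [div_pow, hEpow i, hEpow j, div_self (pow_ne_zero _ hβne)]
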